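/- arXiv:2108.08412 — 8 statements merged into one kernel-verified Lean document; each statement's English description precedes it below -/
import Mathlib

section
/- Let n, m, T be positive natural numbers with T ≥ (m+1)n + m. Let A ∈ ℝ^{n×n} and B ∈ ℝ^{n×m} be such that the pair (A,B) is controllable, i.e. the controllability matrix [B, AB, ..., A^{n-1}B] ∈ ℝ^{n×nm} has rank n. Let u : ℕ → ℝ^m be an input sequence and x : ℕ → ℝ^n a state sequence satisfying x(t+1) = A x(t) + B u(t) for all t. If u is persistently exciting of order n+1, i.e. the block-Hankel matrix U_{0,n+1,T} ∈ ℝ^{m(n+1)×(T-n)} with (i,j)-block u(i+j) for 0 ≤ i ≤ n, 0 ≤ j ≤ T-n-1 has full row rank m(n+1), then the stacked matrix [U_{0,1,T}; X_{0,T}] ∈ ℝ^{(m+n)×T}, whose j-th column is (u(j), x(j)) for 0 ≤ j ≤ T-1, has rank n + m. -/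
/-!
Let `(ξ, η)` be a row vector annihilating every column `(u t, x t)`, `t < T`. Unrolling the
dynamics `k` steps turns the relation at time `t + k` into a relation between
`u t, …, u (t + k)` and `x t`, with coefficient `ηᵀ Aᵏ` on `x t`. Combining these relations for
`k = 0, …, n` with the coefficients of the characteristic polynomial kills the state term by
Cayley–Hamilton, leaving a row vector that annihilates the depth-`(n + 1)` Hankel matrix of the
input. Persistency of excitation forces it to vanish; its blocks form a triangular system in
`ξ` and the `ηᵀ Aᵈ B` with unit diagonal (the characteristic polynomial is monic), so `ξ = 0`
and `ηᵀ Aᵈ B = 0` for `d < n`, whence `η = 0` by controllability.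
-/

open Matrix Finset Polynomial

theorem Matrix.rank_eq_card_iff_forall_vecMul_eq_zero {K p q : Type*} [Field K] [Fintype p]
    [Fintype q] (M : Matrix p q K) : M.rank = Fintype.card p ↔ ∀ c, c ᵥ* M = 0 → c = 0 := by
  calc M.rank = Fintype.card p ↔ LinearIndependent K M.row := by
        rw [linearIndependent_iff_card_eq_finrank_span, rank_eq_finrank_span_row, Set.finrank,
          eq_comm]
    _ ↔ Function.Injective M.vecMulLinear := vecMul_injective_iff.symm
    _ ↔ _ := injective_iff_map_eq_zero _

variable {R κ : Type*} [CommRing R]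

def blockHankel (u : ℕ → κ → R) (L N : ℕ) : Matrix (Fin L × κ) (Fin N) R :=
  of fun ia j => u (ia.1 + j) ia.2

theorem vecMul_blockHankel_apply [Fintype κ] (u c : ℕ → κ → R) {L N : ℕ} (j : Fin N) :
    ((fun ia : Fin L × κ => c ia.1 ia.2) ᵥ* blockHankel u L N) j =
      ∑ i ∈ range L, c i ⬝ᵥ u (j + i) := by
  simp only [vecMul, dotProduct, blockHankel, of_apply, Fintype.sum_prod_type, add_comm (j : ℕ)]
  exact Fin.sum_univ_eq_sum_range (fun i => ∑ a, c i a * u (i + j) a) L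

/-- Block `i` of `∑ₖ p.coeff k • rₖ`, where `rₖ = (v (k-1), …, v 0, ξ, 0, …, 0)` (with `ξ` in
block `k`, and `v s = ηᵀ Aˢ B`) is the row vector of the relation obtained by unrolling the
dynamics `k` steps. -/
def hankelAnnihilator (p : R[X]) (N : ℕ) (ξ : κ → R) (v : ℕ → κ → R) (i : ℕ) : κ → R :=
  p.coeff i • ξ + ∑ k ∈ Ioc i N, p.coeff k • v (k - 1 - i)

theorem eq_zero_of_hankelAnnihilator_eq_zero {p : R[X]} {N : ℕ} (hpN : p.coeff N = 1)
    {ξ : κ → R} {v : ℕ → κ → R} (h : ∀ i ≤ N, hankelAnnihilator p N ξ v i = 0) :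
    ξ = 0 ∧ ∀ d < N, v d = 0 := by
  have hξ : ξ = 0 := by simpa [hankelAnnihilator, hpN] using h N le_rfl
  refine ⟨hξ, fun d => ?_⟩
  induction d using Nat.strong_induction_on with
  | _ d ih =>
    intro hd
    have hblock := h (N - 1 - d) (by omega)
    rwa [hankelAnnihilator, hξ, smul_zero, zero_add, sum_eq_single N, hpN, one_smul,
      show N - 1 - (N - 1 - d) = d by omega] at hblock
    · intro k hk hkN
      simp only [mem_Ioc] at hk
      rw [ih _ (by omega) (by omega), smul_zero]
    · simp only [mem_Ioc]; omega

section LinearSystem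

variable [Fintype κ] {ι : Type*} [Fintype ι] [DecidableEq ι] {A : Matrix ι ι R}
  {B : Matrix ι κ R} {u : ℕ → κ → R} {x : ℕ → ι → R}

theorem state_add_eq (hdyn : ∀ t, x (t + 1) = A *ᵥ x t + B *ᵥ u t) (t k : ℕ) :
    x (t + k) = A ^ k *ᵥ x t + ∑ i ∈ range k, (A ^ (k - 1 - i) * B) *ᵥ u (t + i) := by
  induction k with
  | zero => simp
  | succ k ih =>
    have hpow : ∀ i ∈ range k, A *ᵥ ((A ^ (k - 1 - i) * B) *ᵥ u (t + i)) =
        (A ^ (k + 1 - 1 - i) * B) *ᵥ u (t + i) := fun i hi => by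
      rw [mulVec_mulVec, ← Matrix.mul_assoc, ← pow_succ',
        show k - 1 - i + 1 = k + 1 - 1 - i by simp only [mem_range] at hi; omega]
    rw [← add_assoc, hdyn, ih, mulVec_add, mulVec_mulVec, ← pow_succ', mulVec_sum,
      sum_congr rfl hpow, sum_range_succ, Nat.add_sub_cancel, Nat.sub_self, pow_zero,
      Matrix.one_mul, add_assoc]

variable {ξ : κ → R} {η : ι → R} {T : ℕ}

theorem sum_dotProduct_input_eq_neg_dotProduct_state
    (hdyn : ∀ t, x (t + 1) = A *ᵥ x t + B *ᵥ u t) (hker : ∀ t < T, ξ ⬝ᵥ u t + η ⬝ᵥ x t = 0)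
    {t k : ℕ} (htk : t + k < T) :
    ∑ i ∈ range k, (η ᵥ* (A ^ (k - 1 - i) * B)) ⬝ᵥ u (t + i) + ξ ⬝ᵥ u (t + k) =
      -((η ᵥ* A ^ k) ⬝ᵥ x t) := by
  have hrel := hker (t + k) htk
  rw [state_add_eq hdyn, dotProduct_add, dotProduct_sum] at hrel
  simp only [dotProduct_mulVec] at hrel
  linear_combination hrel

theorem sum_hankelAnnihilator_dotProduct_eq_zero
    (hdyn : ∀ t, x (t + 1) = A *ᵥ x t + B *ᵥ u t) (hker : ∀ t < T, ξ ⬝ᵥ u t + η ⬝ᵥ x t = 0)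
    {p : R[X]} {N : ℕ} (hpN : p.natDegree ≤ N)
    (hpA : aeval A p = 0) {t : ℕ} (ht : t + N < T) :
    ∑ i ∈ range (N + 1), hankelAnnihilator p N ξ (fun s => η ᵥ* (A ^ s * B)) i ⬝ᵥ u (t + i)
      = 0 := by
  have hswap : ∀ i k, i ∈ range (N + 1) ∧ k ∈ Ioc i N ↔ i ∈ range k ∧ k ∈ range (N + 1) :=
    fun i k => by simp only [mem_range, mem_Ioc]; omega
  calc _ = ∑ k ∈ range (N + 1), p.coeff k *
          (∑ i ∈ range k, (η ᵥ* (A ^ (k - 1 - i) * B)) ⬝ᵥ u (t + i) + ξ ⬝ᵥ u (t + k)) := by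
        simp only [hankelAnnihilator, add_dotProduct, sum_dotProduct, smul_dotProduct,
          smul_eq_mul, sum_add_distrib, mul_add, mul_sum, sum_comm' hswap]
        exact add_comm _ _
    _ = ∑ k ∈ range (N + 1), p.coeff k * -((η ᵥ* A ^ k) ⬝ᵥ x t) := sum_congr rfl fun k hk => by
        rw [sum_dotProduct_input_eq_neg_dotProduct_state hdyn hker (by simp only [mem_range] at hk; omega)]
    _ = -((η ᵥ* aeval A p) ⬝ᵥ x t) := by
        simp only [aeval_eq_sum_range' (Nat.lt_succ_of_le hpN), vecMul_sum, vecMul_smul,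
          sum_dotProduct, smul_dotProduct, smul_eq_mul, mul_neg, sum_neg_distrib]
    _ = 0 := by simp [hpA]

end LinearSystem

theorem stmt_0_general (n m T : ℕ)
    (A : Matrix (Fin n) (Fin n) ℝ) (B : Matrix (Fin n) (Fin m) ℝ)
    (hctrb :
      (Matrix.of fun (i : Fin n) (kj : Fin n × Fin m) =>
        (A ^ (kj.1 : ℕ) * B) i kj.2).rank = n)
    (u : ℕ → Fin m → ℝ) (x : ℕ → Fin n → ℝ)
    (hdyn : ∀ t : ℕ, x (t + 1) = A.mulVec (x t) + B.mulVec (u t))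
    (hPE :
      (Matrix.of fun (ia : Fin (n + 1) × Fin m) (j : Fin (T - n)) =>
        u ((ia.1 : ℕ) + (j : ℕ)) ia.2).rank = m * (n + 1)) :
    (Matrix.of fun (i : Fin m ⊕ Fin n) (j : Fin T) =>
      Sum.elim (u (j : ℕ)) (x (j : ℕ)) i).rank = n + m := by
  have hdeg : A.charpoly.natDegree = n := by simp
  have hmonic : A.charpoly.coeff n = 1 := by
    simpa [hdeg] using A.charpoly_monic.coeff_natDegree
  have hH : (blockHankel u (n + 1) (T - n)).rank = Fintype.card (Fin (n + 1) × Fin m) :=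
    hPE.trans (by simp [mul_comm])
  rw [show n + m = Fintype.card (Fin m ⊕ Fin n) by simp [add_comm],
    rank_eq_card_iff_forall_vecMul_eq_zero]
  intro c hc
  set ξ : Fin m → ℝ := fun a => c (Sum.inl a)
  set η : Fin n → ℝ := fun b => c (Sum.inr b)
  have hker : ∀ t < T, ξ ⬝ᵥ u t + η ⬝ᵥ x t = 0 := fun t ht => by
    simpa [vecMul, dotProduct, Fintype.sum_sum_type] using congrFun hc ⟨t, ht⟩
  set w := hankelAnnihilator A.charpoly n ξ (fun s => η ᵥ* (A ^ s * B))
  have hwH : (fun ia : Fin (n + 1) × Fin m => w ia.1 ia.2) ᵥ* blockHankel u (n + 1) (T - n) = 0 :=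
    funext fun j => by
      rw [vecMul_blockHankel_apply]
      exact sum_hankelAnnihilator_dotProduct_eq_zero hdyn hker hdeg.le (aeval_self_charpoly A)
        (by omega)
  have hw := (rank_eq_card_iff_forall_vecMul_eq_zero _).mp hH _ hwH
  obtain ⟨hξ, hv⟩ := eq_zero_of_hankelAnnihilator_eq_zero hmonic
    fun i hi => funext fun a => congrFun hw (⟨i, by omega⟩, a)
  have hη : η = 0 := (rank_eq_card_iff_forall_vecMul_eq_zero _).mp (hctrb.trans (by simp)) η
    (funext fun kj => congrFun (hv kj.1 kj.1.2) kj.2)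
  ext (a | b)
  exacts [congrFun hξ a, congrFun hη b]

/-- **Willems' fundamental lemma (rank consequence).**
If the pair `(A, B)` is controllable, the data satisfy the dynamics
`x(t+1) = A x(t) + B u(t)`, the dataset is long enough (`T ≥ (m+1)n + m`) and the
input is persistently exciting of order `n+1` (the depth-`(n+1)` block Hankel
matrix of the input has full row rank `m(n+1)`), then the stacked data matrix
`[U_{0,1,T}; X_{0,T}]` has rank `n + m`. -/
theorem stmt_0 (n m T : ℕ) (hn : 0 < n) (hm : 0 < m) (hT : (m + 1) * n + m ≤ T)
    (A : Matrix (Fin n) (Fin n) ℝ) (B : Matrix (Fin n) (Fin m) ℝ)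
    (hctrb :
      (Matrix.of fun (i : Fin n) (kj : Fin n × Fin m) =>
        (A ^ (kj.1 : ℕ) * B) i kj.2).rank = n)
    (u : ℕ → Fin m → ℝ) (x : ℕ → Fin n → ℝ)
    (hdyn : ∀ t : ℕ, x (t + 1) = A.mulVec (x t) + B.mulVec (u t))
    (hPE :
      (Matrix.of fun (ia : Fin (n + 1) × Fin m) (j : Fin (T - n)) =>
        u ((ia.1 : ℕ) + (j : ℕ)) ia.2).rank = m * (n + 1)) :
    (Matrix.of fun (i : Fin m ⊕ Fin n) (j : Fin T) =>
      Sum.elim (u (j : ℕ)) (x (j : ℕ)) i).rank = n + m :=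
  stmt_0_general n m T A B hctrb u x hdyn hPE
end

section
/- Let A ∈ ℝ^{n×n}, B ∈ ℝ^{n×m}, and let data matrices U_{0,1,T} ∈ ℝ^{m×T}, X_{0,T} ∈ ℝ^{n×T}, X_{1,T} ∈ ℝ^{n×T} satisfy the consistency relation X_{1,T} = B U_{0,1,T} + A X_{0,T}. Suppose the stacked matrix M = [U_{0,1,T}; X_{0,T}] ∈ ℝ^{(m+n)×T} has rank n+m, and let W ∈ ℝ^{T×(m+n)} be any right inverse of M (M W = I_{m+n}). Then for every u ∈ ℝ^m and every x ∈ ℝ^n, X_{1,T} · W · (u, x) = A x + B u, where (u,x) ∈ ℝ^{m+n} denotes the vector stacking u on top of x. In particular, the data-based map (u,x) ↦ X_{1,T} W (u,x) exactly reproduces the one-step state update of the system x(t+1) = A x(t) + B u(t). -/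
open Matrix

theorem Matrix.mul_add_mul_mul_eq_fromCols {R l m n T : Type*} [Semiring R]
    [Fintype m] [Fintype n] [Fintype T] [DecidableEq m] [DecidableEq n]
    (B : Matrix l m R) (A : Matrix l n R) (U : Matrix m T R) (X : Matrix n T R)
    {W : Matrix T (m ⊕ n) R} (hW : fromRows U X * W = 1) :
    (B * U + A * X) * W = fromCols B A := by
  rw [← fromCols_mul_fromRows, Matrix.mul_assoc, hW, Matrix.mul_one]

theorem stmt_2_general (n m T : ℕ)
    (A : Matrix (Fin n) (Fin n) ℝ) (B : Matrix (Fin n) (Fin m) ℝ)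
    (U0 : Matrix (Fin m) (Fin T) ℝ) (X0 X1 : Matrix (Fin n) (Fin T) ℝ)
    (hdata : X1 = B * U0 + A * X0)
    (W : Matrix (Fin T) (Fin m ⊕ Fin n) ℝ)
    (hW : Matrix.fromRows U0 X0 * W = 1) :
    ∀ (u : Fin m → ℝ) (x : Fin n → ℝ),
      (X1 * W).mulVec (Sum.elim u x) = A.mulVec x + B.mulVec u := by
  intro u x
  rw [hdata, mul_add_mul_mul_eq_fromCols B A U0 X0 hW, fromCols_mulVec_sumElim, add_comm]

/-- **Data-driven system representation.**
If the data are generated by `x(t+1) = A x(t) + B u(t)` (i.e. `X₁ = B U₀ + A X₀`),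
the stacked matrix `M = [U₀; X₀]` has rank `n + m`, and `W` is a right inverse of
`M`, then for every input `u` and state `x` the data-based map reproduces the
one-step update: `X₁ W (u, x) = A x + B u`. -/
theorem stmt_2 (n m T : ℕ)
    (A : Matrix (Fin n) (Fin n) ℝ) (B : Matrix (Fin n) (Fin m) ℝ)
    (U0 : Matrix (Fin m) (Fin T) ℝ) (X0 X1 : Matrix (Fin n) (Fin T) ℝ)
    (hdata : X1 = B * U0 + A * X0)
    (hrank : (Matrix.fromRows U0 X0).rank = n + m)
    (W : Matrix (Fin T) (Fin m ⊕ Fin n) ℝ)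
    (hW : Matrix.fromRows U0 X0 * W = 1) :
    ∀ (u : Fin m → ℝ) (x : Fin n → ℝ),
      (X1 * W).mulVec (Sum.elim u x) = A.mulVec x + B.mulVec u :=
  stmt_2_general n m T A B U0 X0 X1 hdata W hW
end

section
/- Let A ∈ ℝ^{n×n}, B ∈ ℝ^{n×m}, and let U_{0,1,T} ∈ ℝ^{m×T}, X_{0,T} ∈ ℝ^{n×T}, X_{1,T} ∈ ℝ^{n×T} satisfy X_{1,T} = B U_{0,1,T} + A X_{0,T}. Suppose M = [U_{0,1,T}; X_{0,T}] ∈ ℝ^{(m+n)×T} has rank n+m and W ∈ ℝ^{T×(m+n)} is a right inverse of M. Define ξ_d := X_{1,T} W [0_{m×n}; I_n] ∈ ℝ^{n×n} and γ_d := X_{1,T} W [I_m; 0_{n×m}] ∈ ℝ^{n×m}, where [0_{m×n}; I_n] ∈ ℝ^{(m+n)×n} and [I_m; 0_{n×m}] ∈ ℝ^{(m+n)×m} are the block embedding matrices. Then ξ_d = A and γ_d = B. -/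
open Matrix

/-- **Data-based recovery of the system matrices.**
With data generated by `x(t+1) = A x(t) + B u(t)` (`X₁ = B U₀ + A X₀`), the stacked
matrix `M = [U₀; X₀]` of rank `n + m` and a right inverse `W` of `M`, the matrices
`ξ_d := X₁ W [0; Iₙ]` and `γ_d := X₁ W [Iₘ; 0]` coincide with `A` and `B`. -/
theorem stmt_3 (n m T : ℕ)
    (A : Matrix (Fin n) (Fin n) ℝ) (B : Matrix (Fin n) (Fin m) ℝ)
    (U0 : Matrix (Fin m) (Fin T) ℝ) (X0 X1 : Matrix (Fin n) (Fin T) ℝ)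
    (hdata : X1 = B * U0 + A * X0)
    (hrank : (Matrix.fromRows U0 X0).rank = n + m)
    (W : Matrix (Fin T) (Fin m ⊕ Fin n) ℝ)
    (hW : Matrix.fromRows U0 X0 * W = 1) :
    X1 * W * Matrix.fromRows (0 : Matrix (Fin m) (Fin n) ℝ) (1 : Matrix (Fin n) (Fin n) ℝ) = A
    ∧ X1 * W * Matrix.fromRows (1 : Matrix (Fin m) (Fin m) ℝ) (0 : Matrix (Fin n) (Fin m) ℝ) = B := by
  have key : X1 * W = Matrix.fromCols B A := by
    have : X1 = Matrix.fromCols B A * Matrix.fromRows U0 X0 := by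
      rw [Matrix.fromCols_mul_fromRows, hdata]
    rw [this, Matrix.mul_assoc, hW, Matrix.mul_one]
  constructor
  · rw [key, Matrix.fromCols_mul_fromRows, Matrix.mul_zero, Matrix.mul_one, zero_add]
  · rw [key, Matrix.fromCols_mul_fromRows, Matrix.mul_zero, Matrix.mul_one, add_zero]
end

section
/- Let A ∈ ℝ^{n×n}, B ∈ ℝ^{n×m}, K ∈ ℝ^{m×n}, and let U_{0,1,T}, X_{0,T}, X_{1,T} be data matrices satisfying X_{1,T} = B U_{0,1,T} + A X_{0,T}, with M = [U_{0,1,T}; X_{0,T}] of rank n+m and W a right inverse of M. Define ξ_d := X_{1,T} W [0_{m×n}; I_n] and γ_d := X_{1,T} W [I_m; 0_{n×m}]. Then for every natural number j, ξ_d^j γ_d = A^j B, and moreover ξ_d + γ_d K = A + B K. Consequently, every block of the data-driven prediction matrices Ξ_d and Γ_d (whose blocks are powers ξ_d^k, (ξ_d + γ_d K)^k and products ξ_d^j γ_d) coincides with the corresponding block of the model-based matrices Ξ and Γ built from A, B, K, so that the data-driven multi-parametric quadratic program coincides with the model-based one. -/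
open Matrix

/-- **Equivalence of the data-driven and model-based prediction matrices.**
With `ξ_d := X₁ W [0; Iₙ]` and `γ_d := X₁ W [Iₘ; 0]` built from data satisfying
`X₁ = B U₀ + A X₀`, `M = [U₀; X₀]` of rank `n + m` and `M W = I`, one has
`ξ_d^j γ_d = A^j B` for every `j`, `ξ_d + γ_d K = A + B K`, and all the powers
building the blocks of the prediction matrices `Ξ_d, Γ_d` coincide with their
model-based counterparts, so the data-driven mp-QP coincides with the
model-based one. -/
theorem stmt_4 (n m T : ℕ)
    (A : Matrix (Fin n) (Fin n) ℝ) (B : Matrix (Fin n) (Fin m) ℝ)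
    (K : Matrix (Fin m) (Fin n) ℝ)
    (U0 : Matrix (Fin m) (Fin T) ℝ) (X0 X1 : Matrix (Fin n) (Fin T) ℝ)
    (hdata : X1 = B * U0 + A * X0)
    (hrank : (Matrix.fromRows U0 X0).rank = n + m)
    (W : Matrix (Fin T) (Fin m ⊕ Fin n) ℝ)
    (hW : Matrix.fromRows U0 X0 * W = 1)
    (ξd : Matrix (Fin n) (Fin n) ℝ) (γd : Matrix (Fin n) (Fin m) ℝ)
    (hξd : ξd = X1 * W * Matrix.fromRows (0 : Matrix (Fin m) (Fin n) ℝ)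
      (1 : Matrix (Fin n) (Fin n) ℝ))
    (hγd : γd = X1 * W * Matrix.fromRows (1 : Matrix (Fin m) (Fin m) ℝ)
      (0 : Matrix (Fin n) (Fin m) ℝ)) :
    (∀ j : ℕ, ξd ^ j * γd = A ^ j * B)
    ∧ ξd + γd * K = A + B * K
    ∧ (∀ k : ℕ, ξd ^ k = A ^ k)
    ∧ (∀ k : ℕ, (ξd + γd * K) ^ k = (A + B * K) ^ k) := by
  have hX1W : X1 * W = Matrix.fromCols B A := by
    rw [hdata, ← Matrix.fromCols_mul_fromRows, Matrix.mul_assoc, hW, Matrix.mul_one]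
  have hA : ξd = A := by
    rw [hξd, hX1W, Matrix.fromCols_mul_fromRows, Matrix.mul_zero, Matrix.mul_one, zero_add]
  have hB : γd = B := by
    rw [hγd, hX1W, Matrix.fromCols_mul_fromRows, Matrix.mul_zero, Matrix.mul_one, add_zero]
  subst hA hB
  exact ⟨fun j => rfl, rfl, fun k => rfl, fun k => rfl⟩
end

section
/- Let H ∈ ℝ^{N×N} be symmetric positive definite, G ∈ ℝ^{q×N}, W ∈ ℝ^q, S ∈ ℝ^{q×n}, and x ∈ ℝ^n. Let I ⊆ {1,...,q} be a subset of constraint indices, and let G̃ ∈ ℝ^{|I|×N}, W̃ ∈ ℝ^{|I|}, S̃ ∈ ℝ^{|I|×n} consist of the rows of G, W, S indexed by I. Assume the rows of G̃ are linearly independent. Define z* := H^{-1} G̃ᵀ (G̃ H^{-1} G̃ᵀ)^{-1} (W̃ + S̃ x). If −(G̃ H^{-1} G̃ᵀ)^{-1} (W̃ + S̃ x) ≥ 0 componentwise and G z* ≤ W + S x componentwise, then z* is the unique minimizer of the quadratic function z ↦ zᵀ H z over the polyhedron {z ∈ ℝ^N : G z ≤ W + S x}. -/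
/-!
On the active set the candidate `z⋆` satisfies `G̃ z⋆ = W̃ + S̃ x` and
`H z⋆ = -G̃ᵀ λ` with `λ := -(G̃ H⁻¹ G̃ᵀ)⁻¹ (W̃ + S̃ x) ≥ 0`; these are the KKT conditions.
For a feasible `z` they give `⟪H z⋆, z - z⋆⟫ = λ ⬝ (W̃ + S̃ x - G̃ z) ≥ 0`, so expanding
`zᵀ H z = z⋆ᵀ H z⋆ + 2 ⟪H z⋆, z - z⋆⟫ + (z - z⋆)ᵀ H (z - z⋆)` shows that `z⋆` is a minimizer,
and strictly better than every other feasible point because `H` is positive definite.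
-/

open Matrix

section QuadraticForm

variable {n : Type*} [Fintype n] {H : Matrix n n ℝ}

theorem dotProduct_mulVec_add_add (hH : H.IsHermitian) (z d : n → ℝ) :
    (z + d) ⬝ᵥ H *ᵥ (z + d) = z ⬝ᵥ H *ᵥ z + 2 * (H *ᵥ z ⬝ᵥ d) + d ⬝ᵥ H *ᵥ d := by
  have hsymm : z ⬝ᵥ H *ᵥ d = H *ᵥ z ⬝ᵥ d := by
    rw [dotProduct_mulVec, ← mulVec_transpose, ← conjTranspose_eq_transpose_of_trivial, hH.eq]
  rw [mulVec_add, add_dotProduct, dotProduct_add, dotProduct_add, hsymm,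
    dotProduct_comm d (H *ᵥ z)]
  ring

theorem dotProduct_mulVec_le_of_dotProduct_sub_nonneg (hH : H.PosSemidef) {z₀ z : n → ℝ}
    (h : 0 ≤ H *ᵥ z₀ ⬝ᵥ (z - z₀)) : z₀ ⬝ᵥ H *ᵥ z₀ ≤ z ⬝ᵥ H *ᵥ z := by
  have hd := dotProduct_mulVec_add_add hH.isHermitian z₀ (z - z₀)
  rw [add_sub_cancel] at hd
  have := hH.dotProduct_mulVec_nonneg (z - z₀)
  rw [star_trivial] at this
  linarith

theorem unique_minimizer_of_forall_dotProduct_sub_nonneg (hH : H.PosDef) {K : Set (n → ℝ)}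
    {z₀ : n → ℝ} (hz₀ : z₀ ∈ K) (hvi : ∀ z ∈ K, 0 ≤ H *ᵥ z₀ ⬝ᵥ (z - z₀)) :
    (∀ z ∈ K, z₀ ⬝ᵥ H *ᵥ z₀ ≤ z ⬝ᵥ H *ᵥ z) ∧
      ∀ z' ∈ K, (∀ z ∈ K, z' ⬝ᵥ H *ᵥ z' ≤ z ⬝ᵥ H *ᵥ z) → z' = z₀ := by
  refine ⟨fun z hz => dotProduct_mulVec_le_of_dotProduct_sub_nonneg hH.posSemidef (hvi z hz),
    fun z' hz' hmin => ?_⟩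
  by_contra hne
  have hpos := hH.dotProduct_mulVec_pos (sub_ne_zero.mpr hne)
  rw [star_trivial] at hpos
  have hd := dotProduct_mulVec_add_add hH.isHermitian z₀ (z' - z₀)
  rw [add_sub_cancel] at hd
  linarith [hvi z' hz', hmin z₀ hz₀]

end QuadraticForm

section KKT

variable {m n : Type*} [Fintype m] [Fintype n]

theorem neg_transpose_mulVec_dotProduct_sub_nonneg {A : Matrix m n ℝ} {b μ : m → ℝ}
    {z₀ z : n → ℝ} (hμ : 0 ≤ μ) (hactive : A *ᵥ z₀ = b) (hz : A *ᵥ z ≤ b) :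
    0 ≤ -(Aᵀ *ᵥ μ) ⬝ᵥ (z - z₀) := by
  have : -(Aᵀ *ᵥ μ) ⬝ᵥ (z - z₀) = μ ⬝ᵥ (b - A *ᵥ z) := by
    rw [neg_dotProduct, mulVec_transpose, ← dotProduct_mulVec, mulVec_sub, hactive,
      ← dotProduct_neg, neg_sub]
  rw [this]
  exact dotProduct_nonneg_of_nonneg hμ (sub_nonneg.mpr hz)

end KKT

section ActiveSetSolution

variable {m n : Type*} [Fintype m] [Fintype n] [DecidableEq m] [DecidableEq n]
  {K : Type*} [Field K] {H : Matrix n n K} {A : Matrix m n K}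

theorem mul_mulVec_inv_mul_nonsing_inv (hH : IsUnit H.det) (v : m → K) :
    H *ᵥ ((H⁻¹ * Aᵀ * (A * H⁻¹ * Aᵀ)⁻¹) *ᵥ v) = Aᵀ *ᵥ ((A * H⁻¹ * Aᵀ)⁻¹ *ᵥ v) := by
  rw [mulVec_mulVec, mulVec_mulVec, ← Matrix.mul_assoc, ← Matrix.mul_assoc,
    mul_nonsing_inv _ hH, Matrix.one_mul]

theorem mulVec_inv_mul_nonsing_inv (hM : IsUnit (A * H⁻¹ * Aᵀ).det) (v : m → K) :
    A *ᵥ ((H⁻¹ * Aᵀ * (A * H⁻¹ * Aᵀ)⁻¹) *ᵥ v) = v := by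
  rw [mulVec_mulVec, ← Matrix.mul_assoc, ← Matrix.mul_assoc, mul_nonsing_inv _ hM, one_mulVec]

end ActiveSetSolution

theorem Matrix.PosDef.mul_inv_mul_transpose {m n : Type*} [Fintype m] [Fintype n]
    [DecidableEq n] {H : Matrix n n ℝ} (hH : H.PosDef) {A : Matrix m n ℝ}
    (hA : LinearIndependent ℝ A.row) : (A * H⁻¹ * Aᵀ).PosDef := by
  rw [← conjTranspose_eq_transpose_of_trivial]
  exact hH.inv.mul_mul_conjTranspose_same (vecMul_injective_iff.mpr hA)

theorem submatrix_mulVec_le_of_mulVec_le {m m' n o : Type*} [Fintype n] [Fintype o]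
    {G : Matrix m n ℝ} {S : Matrix m o ℝ} {W : m → ℝ} {x : o → ℝ} {z : n → ℝ} (e : m' → m)
    (hz : G *ᵥ z ≤ W + S *ᵥ x) :
    G.submatrix e id *ᵥ z ≤ W ∘ e + S.submatrix e id *ᵥ x :=
  fun i => hz (e i)

/-- **Explicit piecewise-affine solution of the mp-QP on an active-set region.**
Let `H` be symmetric positive definite and let `G̃, W̃, S̃` consist of the rows of
`G, W, S` indexed by a set `I` of active constraints, the rows of `G̃` being
linearly independent.  If the candidate multiplier
`−(G̃ H⁻¹ G̃ᵀ)⁻¹ (W̃ + S̃ x)` is nonnegative and the candidate point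
`zstar := H⁻¹ G̃ᵀ (G̃ H⁻¹ G̃ᵀ)⁻¹ (W̃ + S̃ x)` is feasible, then `zstar` is the
unique minimizer of `z ↦ zᵀ H z` over `{z : G z ≤ W + S x}`. -/
theorem stmt_10 (N q n : ℕ)
    (H : Matrix (Fin N) (Fin N) ℝ) (hH : H.PosDef)
    (G : Matrix (Fin q) (Fin N) ℝ) (W : Fin q → ℝ) (S : Matrix (Fin q) (Fin n) ℝ)
    (x : Fin n → ℝ) (I : Finset (Fin q))
    (Gt : Matrix {i // i ∈ I} (Fin N) ℝ) (Wt : {i // i ∈ I} → ℝ)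
    (St : Matrix {i // i ∈ I} (Fin n) ℝ)
    (hGt : Gt = G.submatrix (fun i : {i // i ∈ I} => (i : Fin q)) id)
    (hWt : Wt = fun i : {i // i ∈ I} => W (i : Fin q))
    (hSt : St = S.submatrix (fun i : {i // i ∈ I} => (i : Fin q)) id)
    (hindep : LinearIndependent ℝ (fun i : {i // i ∈ I} => Gt i))
    (zstar : Fin N → ℝ)
    (hzstar : zstar = (H⁻¹ * Gtᵀ * (Gt * H⁻¹ * Gtᵀ)⁻¹).mulVec (Wt + St.mulVec x))
    (hlam : (0 : {i // i ∈ I} → ℝ) ≤ -((Gt * H⁻¹ * Gtᵀ)⁻¹).mulVec (Wt + St.mulVec x))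
    (hfeas : G.mulVec zstar ≤ W + S.mulVec x) :
    (∀ z : Fin N → ℝ, G.mulVec z ≤ W + S.mulVec x →
        zstar ⬝ᵥ H.mulVec zstar ≤ z ⬝ᵥ H.mulVec z)
    ∧ (∀ z' : Fin N → ℝ, G.mulVec z' ≤ W + S.mulVec x →
        (∀ z : Fin N → ℝ, G.mulVec z ≤ W + S.mulVec x →
          z' ⬝ᵥ H.mulVec z' ≤ z ⬝ᵥ H.mulVec z) → z' = zstar) := by
  have hM := (isUnit_iff_isUnit_det _).mp (hH.mul_inv_mul_transpose hindep).isUnit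
  have hgrad : H *ᵥ zstar = -(Gtᵀ *ᵥ -((Gt * H⁻¹ * Gtᵀ)⁻¹ *ᵥ (Wt + St *ᵥ x))) := by
    rw [hzstar, mul_mulVec_inv_mul_nonsing_inv ((isUnit_iff_isUnit_det _).mp hH.isUnit), mulVec_neg, neg_neg]
  have hactive : Gt *ᵥ zstar = Wt + St *ᵥ x := by rw [hzstar, mulVec_inv_mul_nonsing_inv hM]
  refine unique_minimizer_of_forall_dotProduct_sub_nonneg (K := {z | G *ᵥ z ≤ W + S *ᵥ x})
    hH hfeas fun z hz => ?_
  rw [hgrad]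
  refine neg_transpose_mulVec_dotProduct_sub_nonneg hlam hactive ?_
  subst hGt hWt hSt
  exact submatrix_mulVec_le_of_mulVec_le _ hz
end

section
/- Let A ∈ ℝ^{n×n}, B ∈ ℝ^{n×m}, and let U_{0,1,T}, X_{0,T}, X_{1,T} be data matrices satisfying X_{1,T} = B U_{0,1,T} + A X_{0,T}, with M = [U_{0,1,T}; X_{0,T}] of rank n+m and W a right inverse of M. Fix horizons N_x ≥ N_u ≥ 1, N_c ≥ 1, penalty matrices Q, P ∈ ℝ^{n×n} symmetric positive semidefinite, R ∈ ℝ^{m×m} symmetric positive definite, a feedback gain K ∈ ℝ^{m×n}, constraint matrices C_x ∈ ℝ^{q×n}, C_u ∈ ℝ^{q×m}, d ∈ ℝ^q, and an initial state x ∈ ℝ^n. Consider, for an input sequence (u(0),...,u(N_u−1)) extended by u(k) = K x(k) for N_u ≤ k < N_x, the model-based cost J(x,U) := x(N_x)ᵀPx(N_x) + Σ_{k=0}^{N_x−1} (x(k)ᵀQx(k) + u(k)ᵀRu(k)) and constraints C_x x(k) + C_u u(k) ≤ d for k = 0,...,N_c−1, where x(0)=x and x(k+1) = A x(k) + B u(k);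 and the data-driven cost J_d(x,U) and constraints defined identically except that the state recursion is x(k+1) = X_{1,T} W (u(k), x(k)). Then for every x and every input sequence U, the state trajectories, costs, and constraint sets coincide (J_d(x,U) = J(x,U), and U is feasible for one problem iff it is feasible for the other); consequently, the sets of optimal input sequences of the data-driven and model-based predictive control problems are equal. -/
open Matrix

/-- The closed-loop prediction state: `x(0) = x0`,
`x(k+1) = step u(k) x(k)` where `u(k) = U k` for `k < Nu` and
`u(k) = K x(k)` for `k ≥ Nu`. -/
noncomputable def predState {n m : ℕ}
    (step : (Fin m → ℝ) → (Fin n → ℝ) → (Fin n → ℝ)) (Nu : ℕ)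
    (K : Matrix (Fin m) (Fin n) ℝ) (U : ℕ → Fin m → ℝ) (x0 : Fin n → ℝ) :
    ℕ → Fin n → ℝ
  | 0 => x0
  | k + 1 =>
      step (if k < Nu then U k else K.mulVec (predState step Nu K U x0 k))
        (predState step Nu K U x0 k)

/-- The input actually applied at step `k`: the free variable `U k` for
`k < Nu`, the feedback `K x(k)` afterwards. -/
noncomputable def predInput {n m : ℕ}
    (step : (Fin m → ℝ) → (Fin n → ℝ) → (Fin n → ℝ)) (Nu : ℕ)
    (K : Matrix (Fin m) (Fin n) ℝ) (U : ℕ → Fin m → ℝ) (x0 : Fin n → ℝ)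
    (k : ℕ) : Fin m → ℝ :=
  if k < Nu then U k else K.mulVec (predState step Nu K U x0 k)

/-- The predictive-control cost
`x(Nx)ᵀ P x(Nx) + ∑_{k<Nx} (x(k)ᵀ Q x(k) + u(k)ᵀ R u(k))`. -/
noncomputable def predCost {n m : ℕ}
    (step : (Fin m → ℝ) → (Fin n → ℝ) → (Fin n → ℝ)) (Nu Nx : ℕ)
    (K : Matrix (Fin m) (Fin n) ℝ)
    (Q P : Matrix (Fin n) (Fin n) ℝ) (R : Matrix (Fin m) (Fin m) ℝ)
    (U : ℕ → Fin m → ℝ) (x0 : Fin n → ℝ) : ℝ :=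
  predState step Nu K U x0 Nx ⬝ᵥ P.mulVec (predState step Nu K U x0 Nx)
    + ∑ k ∈ Finset.range Nx,
        (predState step Nu K U x0 k ⬝ᵥ Q.mulVec (predState step Nu K U x0 k)
          + predInput step Nu K U x0 k ⬝ᵥ R.mulVec (predInput step Nu K U x0 k))

/-- Feasibility: `C_x x(k) + C_u u(k) ≤ d` for `k = 0, …, Nc − 1`. -/
def predFeas {n m q : ℕ}
    (step : (Fin m → ℝ) → (Fin n → ℝ) → (Fin n → ℝ)) (Nu Nc : ℕ)
    (K : Matrix (Fin m) (Fin n) ℝ)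
    (Cx : Matrix (Fin q) (Fin n) ℝ) (Cu : Matrix (Fin q) (Fin m) ℝ)
    (d : Fin q → ℝ) (U : ℕ → Fin m → ℝ) (x0 : Fin n → ℝ) : Prop :=
  ∀ k < Nc,
    Cx.mulVec (predState step Nu K U x0 k)
      + Cu.mulVec (predInput step Nu K U x0 k) ≤ d

/-- **Equivalence of the data-driven and model-based predictive control
problems.**  If the data satisfy `X₁ = B U₀ + A X₀`, `M = [U₀; X₀]` has rank
`n + m`, and `W` is a right inverse of `M`, then for every initial state and
every input sequence the data-driven state trajectories, costs and constraint
sets coincide with the model-based ones, and consequently the sets of optimal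
input sequences of the two predictive control problems are equal. -/
theorem stmt_12 (n m T q : ℕ)
    (A : Matrix (Fin n) (Fin n) ℝ) (B : Matrix (Fin n) (Fin m) ℝ)
    (U0 : Matrix (Fin m) (Fin T) ℝ) (X0 X1 : Matrix (Fin n) (Fin T) ℝ)
    (hdata : X1 = B * U0 + A * X0)
    (hrank : (Matrix.fromRows U0 X0).rank = n + m)
    (W : Matrix (Fin T) (Fin m ⊕ Fin n) ℝ)
    (hW : Matrix.fromRows U0 X0 * W = 1)
    (Nx Nu Nc : ℕ) (hNx : Nu ≤ Nx) (hNu : 1 ≤ Nu) (hNc : 1 ≤ Nc)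
    (Q P : Matrix (Fin n) (Fin n) ℝ) (hQ : Q.PosSemidef) (hP : P.PosSemidef)
    (R : Matrix (Fin m) (Fin m) ℝ) (hR : R.PosDef)
    (K : Matrix (Fin m) (Fin n) ℝ)
    (Cx : Matrix (Fin q) (Fin n) ℝ) (Cu : Matrix (Fin q) (Fin m) ℝ) (d : Fin q → ℝ)
    (stepM stepD : (Fin m → ℝ) → (Fin n → ℝ) → (Fin n → ℝ))
    (hstepM : stepM = fun u x => A.mulVec x + B.mulVec u)
    (hstepD : stepD = fun u x => (X1 * W).mulVec (Sum.elim u x)) :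
    ∀ x : Fin n → ℝ,
      (∀ (U : ℕ → Fin m → ℝ) (k : ℕ),
          predState stepD Nu K U x k = predState stepM Nu K U x k)
      ∧ (∀ U : ℕ → Fin m → ℝ,
          predCost stepD Nu Nx K Q P R U x = predCost stepM Nu Nx K Q P R U x)
      ∧ (∀ U : ℕ → Fin m → ℝ,
          predFeas stepD Nu Nc K Cx Cu d U x ↔ predFeas stepM Nu Nc K Cx Cu d U x)
      ∧ {U : ℕ → Fin m → ℝ | predFeas stepD Nu Nc K Cx Cu d U x
            ∧ ∀ U' : ℕ → Fin m → ℝ, predFeas stepD Nu Nc K Cx Cu d U' x →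
                predCost stepD Nu Nx K Q P R U x ≤ predCost stepD Nu Nx K Q P R U' x}
        = {U : ℕ → Fin m → ℝ | predFeas stepM Nu Nc K Cx Cu d U x
            ∧ ∀ U' : ℕ → Fin m → ℝ, predFeas stepM Nu Nc K Cx Cu d U' x →
                predCost stepM Nu Nx K Q P R U x ≤ predCost stepM Nu Nx K Q P R U' x} := by
  have key : ∀ v : Fin m ⊕ Fin n → ℝ,
      Sum.elim ((U0 * W).mulVec v) ((X0 * W).mulVec v) = v := by
    intro v
    rw [← Matrix.fromRows_mulVec, ← Matrix.fromRows_mul, hW, Matrix.one_mulVec]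
  have hsame : stepD = stepM := by
    funext u x
    have h1 : (U0 * W).mulVec (Sum.elim u x) = u := by
      funext i; exact congrFun (key (Sum.elim u x)) (Sum.inl i)
    have h2 : (X0 * W).mulVec (Sum.elim u x) = x := by
      funext i; exact congrFun (key (Sum.elim u x)) (Sum.inr i)
    simp only [hstepD, hstepM]
    rw [hdata, Matrix.add_mul, Matrix.mul_assoc, Matrix.mul_assoc, Matrix.add_mulVec,
      ← Matrix.mulVec_mulVec _ B (U0 * W), ← Matrix.mulVec_mulVec _ A (X0 * W), h1, h2]
    exact add_comm _ _
  subst hsame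
  intro x
  exact ⟨fun _ _ => rfl, fun _ => rfl, fun _ => Iff.rfl, rfl⟩
end

section
/- Let H ∈ ℝ^{N×N} be symmetric positive definite, G ∈ ℝ^{q×N}, W ∈ ℝ^q, and S ∈ ℝ^{q×n}. Let 𝒳 := {x ∈ ℝ^n : ∃z ∈ ℝ^N with G z ≤ W + S x} be the set of parameters for which the feasible set is nonempty, and for x ∈ 𝒳 let z*(x) denote the (unique) minimizer of z ↦ zᵀ H z over {z : G z ≤ W + S x}. Then the map x ↦ z*(x) is continuous on 𝒳. In particular, the explicit piecewise affine predictive control law, which equals the first m components of z*(x) up to an affine change of variables, is continuous over the boundaries of the polyhedral regions characterizing it. -/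
/-!
Write `b = W + S x` for the right-hand side of the constraints. By Fourier–Motzkin elimination the
feasible-set map `b ↦ {z | G z ≤ b}` is lower semicontinuous: a feasible point at `b₀` is the limit
of feasible points at every nearby `b` with nonempty feasible set. Comparing with these points, the
minimisers at parameters near `x₀` have cost at most slightly above the optimal cost at `x₀`, so by
coercivity of `z ↦ zᵀ H z` they stay in a compact set. Every cluster point is feasible at `x₀`
(the constraints are closed) and has cost at most the optimum there, so by strict convexity it is
the unique minimiser `z*(x₀)`.
-/

open Matrix Filter Topology Set

theorem Continuous.finset_fold {X β ι : Type*} [TopologicalSpace X] [TopologicalSpace β]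
    {op : β → β → β} [Std.Commutative op] [Std.Associative op]
    (hop : Continuous fun p : β × β => op p.1 p.2) (s : Finset ι) {b : X → β} {f : ι → X → β}
    (hb : Continuous b) (hf : ∀ i, Continuous (f i)) :
    Continuous fun x => s.fold op (b x) (fun i => f i x) := by
  classical
  induction s using Finset.induction_on with
  | empty => simpa using hb
  | insert i s hi ih =>
    simp only [Finset.fold_insert hi]
    exact hop.comp ((hf i).prodMk ih)

def feasibleSet {ι κ : Type*} [Fintype κ] (G : Matrix ι κ ℝ) (b : ι → ℝ) : Set (κ → ℝ) :=
  {z | G *ᵥ z ≤ b}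

theorem convex_feasibleSet {ι κ : Type*} [Fintype κ] (G : Matrix ι κ ℝ) (b : ι → ℝ) :
    Convex ℝ (feasibleSet G b) :=
  (convex_Iic b).linear_preimage G.mulVecLin

theorem mulVec_finCons {ι : Type*} {N : ℕ} (G : Matrix ι (Fin (N + 1)) ℝ) (t : ℝ)
    (z : Fin N → ℝ) :
    G *ᵥ Fin.cons t z = t • (G · 0) + G.submatrix id Fin.succ *ᵥ z := by
  ext i
  simp [mulVec, dotProduct, Fin.sum_univ_succ, mul_comm]

namespace FourierMotzkin

variable {ι : Type*} [Fintype ι] (α : ι → ℝ)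

/-- The point of the interval `{t | ∀ i, α i * t ≤ r i}` nearest to `t₀`, when that interval is
nonempty. -/
noncomputable def clamp (r : ι → ℝ) (t₀ : ℝ) : ℝ :=
  (Finset.univ.filter (α · < 0)).fold max
    ((Finset.univ.filter (0 < α ·)).fold min t₀ fun i => r i / α i) fun i => r i / α i

theorem clamp_eq_self {r : ι → ℝ} {t₀ : ℝ} (h : ∀ i, α i * t₀ ≤ r i) : clamp α r t₀ = t₀ := by
  have hupper : (Finset.univ.filter (0 < α ·)).fold min t₀ (fun i => r i / α i) = t₀ := by
    refine le_antisymm ((Finset.fold_min_le _).2 (.inl le_rfl))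
      ((Finset.le_fold_min _).2 ⟨le_rfl, fun i hi => ?_⟩)
    rw [le_div_iff₀ (by simpa using hi), mul_comm]
    exact h i
  refine le_antisymm ((Finset.fold_max_le _).2 ⟨hupper.le, fun j hj => ?_⟩)
    ((Finset.le_fold_max _).2 (.inl hupper.ge))
  rw [div_le_iff_of_neg (by simpa using hj), mul_comm]
  exact h j

theorem continuous_clamp (t₀ : ℝ) : Continuous fun r => clamp α r t₀ :=
  continuous_max.finset_fold _ (continuous_min.finset_fold _ continuous_const
    fun i => (continuous_apply i).div_const _) fun i => (continuous_apply i).div_const _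

variable [DecidableEq ι]

/-- Fourier–Motzkin elimination of `t` from `α i * t ≤ r i`: nonnegative combinations of the
constraints in which `t` cancels, which together say exactly that the system is solvable. -/
def combination :
    Matrix ({i // α i = 0} ⊕ {p : ι × ι // 0 < α p.1 ∧ α p.2 < 0}) ι ℝ :=
  Matrix.of <| Sum.elim (fun i => Pi.single i.1 1)
    (fun p => α p.1.1 • Pi.single p.1.2 1 - α p.1.2 • Pi.single p.1.1 1)

theorem combination_mulVec_inl (r : ι → ℝ) (i : {i // α i = 0}) :
    (combination α *ᵥ r) (.inl i) = r i.1 := by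
  simp [combination, mulVec, single_dotProduct]

theorem combination_mulVec_inr (r : ι → ℝ) (p : {p : ι × ι // 0 < α p.1 ∧ α p.2 < 0}) :
    (combination α *ᵥ r) (.inr p) = α p.1.1 * r p.1.2 - α p.1.2 * r p.1.1 := by
  change (_ - _) ⬝ᵥ r = _
  simp [sub_dotProduct, single_dotProduct]

theorem combination_mulVec_self : combination α *ᵥ α = 0 := by
  ext (i | p)
  · simpa [combination_mulVec_inl] using i.2
  · simp only [combination_mulVec_inr, Pi.zero_apply]
    ring

theorem combination_mulVec_mono {u v : ι → ℝ} (huv : u ≤ v) :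
    combination α *ᵥ u ≤ combination α *ᵥ v := by
  rintro (i | ⟨⟨i, j⟩, hi, hj⟩)
  · simpa only [combination_mulVec_inl] using huv i
  · simp only [combination_mulVec_inr]
    nlinarith [huv i, huv j]

theorem mul_clamp_le {r : ι → ℝ} (hr : 0 ≤ combination α *ᵥ r) (t₀ : ℝ) (i : ι) :
    α i * clamp α r t₀ ≤ r i := by
  rcases lt_trichotomy (α i) 0 with hi | hi | hi
  · have hle : r i / α i ≤ clamp α r t₀ :=
      (Finset.le_fold_max _).2 (.inr ⟨i, by simpa using hi, le_rfl⟩)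
    simpa [mul_div_cancel₀ _ hi.ne] using mul_le_mul_of_nonpos_left hle hi.le
  · simpa [combination_mulVec_inl, hi] using hr (.inl ⟨i, hi⟩)
  · have hle : clamp α r t₀ ≤ r i / α i := by
      refine (Finset.fold_max_le _).2
        ⟨(Finset.fold_min_le _).2 (.inr ⟨i, by simpa using hi, le_rfl⟩), fun j hj => ?_⟩
      replace hj : α j < 0 := by simpa using hj
      have hij := hr (.inr ⟨(i, j), hi, hj⟩)
      simp only [combination_mulVec_inr, Pi.zero_apply] at hij
      rw [div_le_iff_of_neg hj, div_mul_eq_mul_div, div_le_iff₀ hi]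
      linarith
    simpa [mul_div_cancel₀ _ hi.ne'] using mul_le_mul_of_nonneg_left hle hi.le

end FourierMotzkin

open FourierMotzkin in
theorem exists_tendsto_mem_feasibleSet {N : ℕ} {ι : Type*} [Fintype ι] (G : Matrix ι (Fin N) ℝ)
    {b₀ : ι → ℝ} {z₀ : Fin N → ℝ} (h₀ : z₀ ∈ feasibleSet G b₀) :
    ∃ F : (ι → ℝ) → Fin N → ℝ,
      (∀ b, (feasibleSet G b).Nonempty → F b ∈ feasibleSet G b) ∧ Tendsto F (𝓝 b₀) (𝓝 z₀) := by
  induction N generalizing ι with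
  | zero =>
    refine ⟨fun _ => z₀, fun b ⟨z, hz⟩ => ?_, tendsto_const_nhds⟩
    rwa [Subsingleton.elim z₀ z]
  | succ N ih =>
    classical
    set α : ι → ℝ := (G · 0)
    set A := G.submatrix id Fin.succ
    set C := combination α
    have hsplit (z : Fin (N + 1) → ℝ) : G *ᵥ z = z 0 • α + A *ᵥ Fin.tail z := by
      rw [← mulVec_finCons, Fin.cons_self_tail]
    have hreduce {b : ι → ℝ} {z : Fin (N + 1) → ℝ} (hz : z ∈ feasibleSet G b) :
        Fin.tail z ∈ feasibleSet (C * A) (C *ᵥ b) := by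
      have := combination_mulVec_mono α hz
      rwa [hsplit, mulVec_add, mulVec_smul, combination_mulVec_self, smul_zero, zero_add,
        mulVec_mulVec] at this
    -- The other coordinates solve the eliminated system; the first one is then `z₀ 0` clamped
    -- to the interval this leaves for it.
    obtain ⟨F', hF'mem, hF'lim⟩ := ih (C * A) (hreduce h₀)
    have hCcont : Continuous fun b : ι → ℝ => C *ᵥ b :=
      continuous_const.matrix_mulVec continuous_id
    set r : (ι → ℝ) → ι → ℝ := fun b => b - A *ᵥ F' (C *ᵥ b)
    refine ⟨fun b => Fin.cons (clamp α (r b) (z₀ 0)) (F' (C *ᵥ b)), ?_, ?_⟩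
    · rintro b ⟨z, hz⟩ i
      have hr : 0 ≤ C *ᵥ r b := by
        rw [mulVec_sub, mulVec_mulVec, sub_nonneg]
        exact hF'mem _ ⟨_, hreduce hz⟩
      have := mul_clamp_le α hr (z₀ 0) i
      simp only [mulVec_finCons, Pi.add_apply, Pi.smul_apply, smul_eq_mul, r, Pi.sub_apply]
        at this ⊢
      linarith
    · have hF'b : Tendsto (fun b => F' (C *ᵥ b)) (𝓝 b₀) (𝓝 (Fin.tail z₀)) :=
        hF'lim.comp (hCcont.tendsto b₀)
      have hr : Tendsto r (𝓝 b₀) (𝓝 (b₀ - A *ᵥ Fin.tail z₀)) :=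
        tendsto_id.sub ((continuous_const.matrix_mulVec continuous_id).tendsto _ |>.comp hF'b)
      have hclamp := (continuous_clamp α (z₀ 0)).tendsto _ |>.comp hr
      rw [clamp_eq_self α fun i => ?_] at hclamp
      · simpa only [Fin.cons_self_tail, Function.comp_def]
          using hclamp.finCons (A := fun _ => ℝ) hF'b
      · have := h₀ i
        rw [hsplit] at this
        simp only [Pi.add_apply, Pi.smul_apply, smul_eq_mul, Pi.sub_apply] at this ⊢
        linarith

namespace Matrix.PosDef

variable {n : Type*} [Fintype n] {H : Matrix n n ℝ}

theorem strictConvexOn_dotProduct_mulVec (hH : H.PosDef) :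
    StrictConvexOn ℝ univ fun v : n → ℝ => v ⬝ᵥ H *ᵥ v := by
  refine ⟨convex_univ, fun x _ y _ hxy a b ha hb hab => ?_⟩
  have hgap : a • (x ⬝ᵥ H *ᵥ x) + b • (y ⬝ᵥ H *ᵥ y)
      - (a • x + b • y) ⬝ᵥ H *ᵥ (a • x + b • y) = a * b * ((x - y) ⬝ᵥ H *ᵥ (x - y)) := by
    obtain rfl : b = 1 - a := by linarith
    simp only [mulVec_add, mulVec_sub, mulVec_smul, add_dotProduct, sub_dotProduct,
      dotProduct_add, dotProduct_sub, smul_dotProduct, dotProduct_smul, smul_eq_mul]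
    ring
  have hpos : 0 < (x - y) ⬝ᵥ H *ᵥ (x - y) := by
    simpa using hH.dotProduct_mulVec_pos (sub_ne_zero.2 hxy)
  nlinarith [mul_pos ha hb]

theorem exists_pos_mul_sq_norm_le (hH : H.PosDef) :
    ∃ c > 0, ∀ v : n → ℝ, c * ‖v‖ ^ 2 ≤ v ⬝ᵥ H *ᵥ v := by
  have hsmul (t : ℝ) (v : n → ℝ) : (t • v) ⬝ᵥ H *ᵥ (t • v) = t ^ 2 * (v ⬝ᵥ H *ᵥ v) := by
    simp only [mulVec_smul, smul_dotProduct, dotProduct_smul, smul_eq_mul]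
    ring
  obtain ⟨c, hc, hsphere⟩ : ∃ c > 0, ∀ u ∈ Metric.sphere (0 : n → ℝ) 1, c ≤ u ⬝ᵥ H *ᵥ u := by
    rcases (Metric.sphere (0 : n → ℝ) 1).eq_empty_or_nonempty with h | h
    · exact ⟨1, one_pos, by simp [h]⟩
    · obtain ⟨u₀, hu₀, hmin⟩ := (isCompact_sphere 0 1).exists_isMinOn h
        (continuous_id.dotProduct (continuous_const.matrix_mulVec continuous_id)).continuousOn
      have hu₀ : u₀ ≠ 0 := norm_ne_zero_iff.1 (by simp_all)
      exact ⟨_, by simpa using hH.dotProduct_mulVec_pos hu₀, hmin⟩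
  refine ⟨c, hc, fun v => ?_⟩
  rcases eq_or_ne v 0 with rfl | hv
  · simp
  have hnorm : 0 < ‖v‖ := norm_pos_iff.2 hv
  have hu := hsphere (‖v‖⁻¹ • v) (by simp [norm_smul, hnorm.ne'])
  calc c * ‖v‖ ^ 2 ≤ ‖v‖ ^ 2 * ((‖v‖⁻¹ • v) ⬝ᵥ H *ᵥ (‖v‖⁻¹ • v)) := by
        nlinarith [sq_pos_of_pos hnorm]
    _ = v ⬝ᵥ H *ᵥ v := by rw [← hsmul, smul_inv_smul₀ hnorm.ne']

theorem tendsto_dotProduct_mulVec_cocompact (hH : H.PosDef) :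
    Tendsto (fun v : n → ℝ => v ⬝ᵥ H *ᵥ v) (cocompact _) atTop := by
  obtain ⟨c, hc, hle⟩ := hH.exists_pos_mul_sq_norm_le
  exact tendsto_atTop_mono hle <|
    ((tendsto_pow_atTop two_ne_zero).comp tendsto_norm_cocompact_atTop).const_mul_atTop hc

end Matrix.PosDef

theorem tendsto_of_isMinOn_feasibleSet {α ι : Type*} [Fintype ι] {N : ℕ}
    {f : (Fin N → ℝ) → ℝ} (hf : Continuous f) (hconv : StrictConvexOn ℝ univ f)
    (hcoer : Tendsto f (cocompact _) atTop) (G : Matrix ι (Fin N) ℝ) {l : Filter α}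
    {b : α → ι → ℝ} {b₀ : ι → ℝ} (hb : Tendsto b l (𝓝 b₀)) {z : α → Fin N → ℝ}
    (hz : ∀ᶠ y in l, z y ∈ feasibleSet G (b y) ∧ IsMinOn f (feasibleSet G (b y)) (z y))
    {z₀ : Fin N → ℝ} (hz₀ : z₀ ∈ feasibleSet G b₀) (hz₀min : IsMinOn f (feasibleSet G b₀) z₀) :
    Tendsto z l (𝓝 z₀) := by
  obtain ⟨F, hFmem, hFlim⟩ := exists_tendsto_mem_feasibleSet G hz₀
  have hle : ∀ᶠ y in l, f (z y) ≤ f (F (b y)) :=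
    hz.mono fun y hy => hy.2 (hFmem _ ⟨_, hy.1⟩)
  have hlim : Tendsto (fun y => f (F (b y))) l (𝓝 (f z₀)) := (hf.tendsto z₀).comp (hFlim.comp hb)
  obtain ⟨K, hK, hKc⟩ := mem_cocompact.1 (hcoer.eventually_gt_atTop (f z₀ + 1))
  refine hK.tendsto_nhds_of_unique_mapClusterPt ?_ fun w _ hw => ?_
  · filter_upwards [hle, hlim.eventually_le_const (lt_add_one _)] with y h₁ h₂
    by_contra hy
    exact (hKc hy).not_ge (h₁.trans h₂)
  obtain ⟨U, hUl, hUw⟩ := mapClusterPt_iff_ultrafilter.1 hw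
  have hw_mem : w ∈ feasibleSet G b₀ :=
    le_of_tendsto_of_tendsto
      ((continuous_const.matrix_mulVec continuous_id).tendsto w |>.comp hUw) (hb.mono_left hUl)
      ((hz.filter_mono hUl).mono fun y hy => hy.1)
  have hw_le : f w ≤ f z₀ :=
    le_of_tendsto_of_tendsto ((hf.tendsto w).comp hUw) (hlim.mono_left hUl) (hle.filter_mono hUl)
  exact (hconv.subset (subset_univ _) (convex_feasibleSet G b₀)).eq_of_isMinOn
    (fun v hv => hw_le.trans (hz₀min hv)) hz₀min hw_mem hz₀

/-- **Continuity of the explicit mp-QP solution.**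
Let `H` be symmetric positive definite and let
`𝒳 = {x : ∃ z, G z ≤ W + S x}` be the set of parameters with nonempty feasible
set.  If `zstar x` is, for every `x ∈ 𝒳`, the (unique) minimizer of
`z ↦ zᵀ H z` over `{z : G z ≤ W + S x}`, then `zstar` is continuous on `𝒳`;
in particular the explicit piecewise affine predictive control law is
continuous over the boundaries of its polyhedral regions. -/
theorem stmt_13 (N q n : ℕ)
    (H : Matrix (Fin N) (Fin N) ℝ) (hH : H.PosDef)
    (G : Matrix (Fin q) (Fin N) ℝ) (W : Fin q → ℝ) (S : Matrix (Fin q) (Fin n) ℝ)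
    (zstar : (Fin n → ℝ) → (Fin N → ℝ))
    (hfeas : ∀ x ∈ {x : Fin n → ℝ | ∃ z : Fin N → ℝ, G.mulVec z ≤ W + S.mulVec x},
        G.mulVec (zstar x) ≤ W + S.mulVec x)
    (hmin : ∀ x ∈ {x : Fin n → ℝ | ∃ z : Fin N → ℝ, G.mulVec z ≤ W + S.mulVec x},
        ∀ z : Fin N → ℝ, G.mulVec z ≤ W + S.mulVec x →
          zstar x ⬝ᵥ H.mulVec (zstar x) ≤ z ⬝ᵥ H.mulVec z) :
    ContinuousOn zstar
      {x : Fin n → ℝ | ∃ z : Fin N → ℝ, G.mulVec z ≤ W + S.mulVec x} := by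
  intro x hx
  have hrhs : Continuous fun y => W + S *ᵥ y := continuous_const.add
    (continuous_const.matrix_mulVec continuous_id)
  refine tendsto_of_isMinOn_feasibleSet
    (continuous_id.dotProduct (continuous_const.matrix_mulVec continuous_id))
    hH.strictConvexOn_dotProduct_mulVec hH.tendsto_dotProduct_mulVec_cocompact G
    hrhs.continuousWithinAt ?_ (hfeas x hx) (hmin x hx)
  filter_upwards [self_mem_nhdsWithin] with y hy using ⟨hfeas y hy, hmin y hy⟩
end

section
/- Let A ∈ ℝ^{n×n}, B ∈ ℝ^{n×m}, U₀ ∈ ℝ^{m×T}, and let X₀, X₁ ∈ ℝ^{n×T} satisfy X₁ = B U₀ + A X₀, with M := [U₀; X₀] ∈ ℝ^{(m+n)×T} of rank n+m. Let (X̄₀^L)_{L∈ℕ} and (X̄₁^L)_{L∈ℕ} be sequences of matrices in ℝ^{n×T} converging entrywise to X₀ and X₁ respectively, and set M_L := [U₀; X̄₀^L]. Then for all sufficiently large L the matrix M_L M_Lᵀ is invertible, and defining ξ_d^L := X̄₁^L M_Lᵀ (M_L M_Lᵀ)^{-1} [0_{m×n}; I_n] and γ_d^L := X̄₁^L M_Lᵀ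 (M_L M_Lᵀ)^{-1} [I_m; 0_{n×m}], one has ξ_d^L → A and γ_d^L → B entrywise as L → ∞. Consequently, all matrices of the data-driven explicit predictive controller built from the averaged data converge to their noiseless counterparts. -/
/-!
The map `(Y, M) ↦ Y Mᵀ (M Mᵀ)⁻¹` is continuous wherever `M Mᵀ` is invertible, and full row rank of
`M = [U₀; X₀]` makes `M Mᵀ` invertible. On noiseless data `X₁ = [B A] M`, so this map returns
exactly `[B A]`; by continuity it returns approximately `[B A]` on the averaged data, and
multiplying by the block embeddings `[0; Iₙ]` and `[Iₘ; 0]` extracts `A` and `B`.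
-/

open Matrix Filter Topology

namespace Matrix

variable {X K R : Type*} {l m n p : Type*}

theorem _root_.Continuous.matrix_fromRows [TopologicalSpace X] [TopologicalSpace R]
    {f : X → Matrix m n R} {g : X → Matrix l n R} (hf : Continuous f) (hg : Continuous g) :
    Continuous fun x => fromRows (f x) (g x) :=
  continuous_pi fun
    | .inl i => continuous_apply i |>.comp hf
    | .inr i => continuous_apply i |>.comp hg

theorem isOpen_setOf_isUnit [Fintype n] [DecidableEq n] [Field K] [TopologicalSpace K]
    [IsTopologicalRing K] [T1Space K] : IsOpen {A : Matrix n n K | IsUnit A} := by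
  simp_rw [isUnit_iff_isUnit_det, isUnit_iff_ne_zero]
  exact isOpen_compl_singleton.preimage continuous_id.matrix_det

theorem isUnit_of_rank_eq_card [Fintype n] [DecidableEq n] [Field K] {A : Matrix n n K}
    (h : A.rank = Fintype.card n) : IsUnit A := by
  rw [← mulVec_surjective_iff_isUnit, ← coe_mulVecLin, ← LinearMap.range_eq_top]
  apply Submodule.eq_top_of_finrank_eq
  rw [← rank, h, Module.finrank_fintype_fun_eq_card]

theorem isUnit_mul_transpose_of_rank_eq_card [Fintype m] [DecidableEq m] [Fintype n] [Field K]
    [LinearOrder K] [IsStrictOrderedRing K] {M : Matrix m n K} (h : M.rank = Fintype.card m) :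
    IsUnit (M * Mᵀ) :=
  isUnit_of_rank_eq_card (by rw [rank_self_mul_transpose, h])

theorem mul_mul_mul_inv_of_isUnit [Fintype m] [DecidableEq m] [Fintype n] [CommRing R]
    (C : Matrix p m R) {M : Matrix m n R} {N : Matrix n m R} (h : IsUnit (M * N)) :
    C * M * N * (M * N)⁻¹ = C := by
  rw [Matrix.mul_assoc C, Matrix.mul_assoc, mul_nonsing_inv _ ((isUnit_iff_isUnit_det _).1 h),
    Matrix.mul_one]

theorem continuousAt_inv_of_isUnit [Fintype n] [DecidableEq n] [Field K] [TopologicalSpace K]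
    [IsTopologicalDivisionRing K] {A : Matrix n n K} (h : IsUnit A) : ContinuousAt Inv.inv A := by
  refine continuousAt_matrix_inv A ?_
  rw [Ring.inverse_eq_inv']
  exact continuousAt_inv₀ ((isUnit_iff_isUnit_det A).1 h).ne_zero

theorem continuousAt_mul_transpose_mul_inv [Fintype m] [DecidableEq m] [Fintype n] [Field K]
    [TopologicalSpace K] [IsTopologicalDivisionRing K] {Y : Matrix p n K}
    {M : Matrix m n K} (h : IsUnit (M * Mᵀ)) :
    ContinuousAt (fun YM : Matrix p n K × Matrix m n K => YM.1 * YM.2ᵀ * (YM.2 * YM.2ᵀ)⁻¹)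
      (Y, M) := by
  have hGram : Continuous fun YM : Matrix p n K × Matrix m n K => YM.2 * YM.2ᵀ :=
    continuous_snd.matrix_mul continuous_snd.matrix_transpose
  have hfactors := (continuous_fst.matrix_mul continuous_snd.matrix_transpose).continuousAt.prodMk
    ((continuousAt_inv_of_isUnit h).comp (x := (Y, M)) hGram.continuousAt)
  exact (continuous_fst.matrix_mul continuous_snd).continuousAt.comp hfactors

end Matrix

/-- **Asymptotic model/noisy-data equivalence.**
Let the noiseless data satisfy `X₁ = B U₀ + A X₀` with `M = [U₀; X₀]` of rank
`n + m`, and let averaged data matrices `X̄₀^L, X̄₁^L` converge entrywise to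
`X₀, X₁`.  Then for all sufficiently large `L` the matrix `M_L M_Lᵀ` (with
`M_L = [U₀; X̄₀^L]`) is invertible, and the data-driven matrices
`ξ_d^L := X̄₁^L M_Lᵀ (M_L M_Lᵀ)⁻¹ [0; Iₙ]` and
`γ_d^L := X̄₁^L M_Lᵀ (M_L M_Lᵀ)⁻¹ [Iₘ; 0]` converge entrywise to `A` and `B`
respectively, so all matrices of the data-driven explicit predictive controller
built from the averaged data converge to their noiseless counterparts. -/
theorem stmt_15 (n m T : ℕ)
    (A : Matrix (Fin n) (Fin n) ℝ) (B : Matrix (Fin n) (Fin m) ℝ)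
    (U0 : Matrix (Fin m) (Fin T) ℝ) (X0 X1 : Matrix (Fin n) (Fin T) ℝ)
    (hdata : X1 = B * U0 + A * X0)
    (hrank : (Matrix.fromRows U0 X0).rank = n + m)
    (X0L X1L : ℕ → Matrix (Fin n) (Fin T) ℝ)
    (hX0 : ∀ (i : Fin n) (j : Fin T),
      Tendsto (fun L : ℕ => X0L L i j) atTop (nhds (X0 i j)))
    (hX1 : ∀ (i : Fin n) (j : Fin T),
      Tendsto (fun L : ℕ => X1L L i j) atTop (nhds (X1 i j))) :
    (∀ᶠ L : ℕ in atTop,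
        IsUnit (Matrix.fromRows U0 (X0L L) * (Matrix.fromRows U0 (X0L L))ᵀ))
    ∧ (∀ (i : Fin n) (j : Fin n),
        Tendsto (fun L : ℕ =>
          (X1L L * (Matrix.fromRows U0 (X0L L))ᵀ
            * (Matrix.fromRows U0 (X0L L) * (Matrix.fromRows U0 (X0L L))ᵀ)⁻¹
            * Matrix.fromRows (0 : Matrix (Fin m) (Fin n) ℝ)
                (1 : Matrix (Fin n) (Fin n) ℝ)) i j)
          atTop (nhds (A i j)))
    ∧ (∀ (i : Fin n) (j : Fin m),
        Tendsto (fun L : ℕ =>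
          (X1L L * (Matrix.fromRows U0 (X0L L))ᵀ
            * (Matrix.fromRows U0 (X0L L) * (Matrix.fromRows U0 (X0L L))ᵀ)⁻¹
            * Matrix.fromRows (1 : Matrix (Fin m) (Fin m) ℝ)
                (0 : Matrix (Fin n) (Fin m) ℝ)) i j)
          atTop (nhds (B i j))) := by
  have hM : Tendsto (fun L => fromRows U0 (X0L L)) atTop (𝓝 (fromRows U0 X0)) :=
    ((continuous_const.matrix_fromRows continuous_id).tendsto X0).comp
      (tendsto_pi_nhds.2 fun i => tendsto_pi_nhds.2 (hX0 i))
  have hGram : IsUnit (fromRows U0 X0 * (fromRows U0 X0)ᵀ) :=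
    isUnit_mul_transpose_of_rank_eq_card (by simp [hrank, add_comm])
  have hest : Tendsto (fun L => X1L L * (fromRows U0 (X0L L))ᵀ
      * (fromRows U0 (X0L L) * (fromRows U0 (X0L L))ᵀ)⁻¹) atTop (𝓝 (fromCols B A)) := by
    have hlim := (continuousAt_mul_transpose_mul_inv (Y := X1) hGram).tendsto.comp
      ((tendsto_pi_nhds.2 fun i => tendsto_pi_nhds.2 (hX1 i)).prodMk_nhds hM)
    rwa [hdata, ← fromCols_mul_fromRows, mul_mul_mul_inv_of_isUnit _ hGram] at hlim
  have hblock {k : Type} [Fintype k] (E : Matrix (Fin m ⊕ Fin n) k ℝ) (i : Fin n) (j : k) :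
      Tendsto (fun L => (X1L L * (fromRows U0 (X0L L))ᵀ
        * (fromRows U0 (X0L L) * (fromRows U0 (X0L L))ᵀ)⁻¹ * E) i j) atTop
        (𝓝 ((fromCols B A * E) i j)) :=
    (((continuous_id.matrix_mul continuous_const).matrix_elem i j).tendsto _).comp hest
  have hopen : IsOpen {M : Matrix (Fin m ⊕ Fin n) (Fin T) ℝ | IsUnit (M * Mᵀ)} :=
    isOpen_setOf_isUnit.preimage (continuous_id.matrix_mul continuous_id.matrix_transpose)
  refine ⟨hM.eventually (hopen.mem_nhds hGram), fun i j => ?_, fun i j => ?_⟩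
  · simpa [fromCols_mul_fromRows] using hblock (fromRows 0 1) i j
  · simpa [fromCols_mul_fromRows] using hblock (fromRows 1 0) i j
end
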